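/- arXiv:2509.07724 — 5 statements merged into one kernel-verified Lean document; each statement's English description precedes it below -/
import Mathlib

section
/- For positive integers n and k with k < n < 2k, if A_1, A_2, ..., A_ℓ are signed k-subsets of [n] (i.e., subsets of {±1,...,±n} of size k containing no element together with its negation) such that A_i ∩ (−A_{i+1}) = ∅ for all 1 ≤ i ≤ ℓ−1 and A_1 ∩ A_ℓ = ∅, then ℓ ≥ 1 + ⌈k/(n−k)⌉. -/
/-- A signed `k`-subset of `[n]`: a set `S ⊆ {±1, …, ±n}` with `|S| = k` and `S ∩ (-S) = ∅`. -/
def SignedSubset (n k : ℕ) (S : Finset ℤ) : Prop :=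
  S.card = k ∧ (∀ a ∈ S, a ≠ 0 ∧ a.natAbs ≤ n) ∧ ∀ a ∈ S, -a ∉ S

private lemma signed_abs_card {n k : ℕ} {S : Finset ℤ} (hS : SignedSubset n k S) :
    (S.image Int.natAbs).card = k := by
  rw [Finset.card_image_of_injOn, hS.1]
  intro a ha b hb hab
  rcases Int.natAbs_eq_natAbs_iff.1 hab with h | h
  · exact h
  · exact absurd (h ▸ ha) (by simpa using hS.2.2 b hb)

private lemma signed_abs_subset {n k : ℕ} {S : Finset ℤ} (hS : SignedSubset n k S) :
    S.image Int.natAbs ⊆ Finset.Icc 1 n := by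
  intro m hm
  simp only [Finset.mem_image] at hm
  obtain ⟨a, ha, rfl⟩ := hm
  obtain ⟨h0, hn⟩ := hS.2.1 a ha
  exact Finset.mem_Icc.2 ⟨Nat.one_le_iff_ne_zero.2 (by simpa using h0), hn⟩

/-- If `A 0, …, A (ℓ-1)` are signed `k`-subsets of `[n]` (with `k < n < 2k`) forming an
inconsistent cycle — consecutive ones satisfy `A i ∩ (-(A (i+1))) = ∅` and the ends satisfy
`A 0 ∩ A (ℓ-1) = ∅` — then `ℓ ≥ 1 + ⌈k/(n-k)⌉`. -/
theorem stmt_0 (n k ℓ : ℕ) (hk : 0 < k) (h1 : k < n) (h2 : n < 2 * k)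
    (hℓ : 1 ≤ ℓ) (A : ℕ → Finset ℤ)
    (hsigned : ∀ i < ℓ, SignedSubset n k (A i))
    (hpos : ∀ i, i + 1 < ℓ → ∀ a ∈ A i, -a ∉ A (i + 1))
    (hneg : Disjoint (A 0) (A (ℓ - 1))) :
    1 + ⌈(k : ℚ) / ((n : ℚ) - (k : ℚ))⌉₊ ≤ ℓ := by
  set t := n - k with ht
  have htpos : 0 < t := Nat.sub_pos_of_lt h1
  -- key step lemma
  have step : ∀ i, i + 1 < ℓ →
      ((A 0) ∩ (A i)).card ≤ ((A 0) ∩ (A (i+1))).card + t := by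
    intro i hi
    have hSi := hsigned i (Nat.lt_of_succ_lt hi)
    have hSi1 := hsigned (i+1) hi
    set D := ((A 0) ∩ (A i)).filter (fun a => a ∉ A (i+1)) with hD
    have hsub : (A 0) ∩ (A i) ⊆ ((A 0) ∩ (A (i+1))) ∪ D := by
      intro a ha
      by_cases h : a ∈ A (i+1)
      · exact Finset.mem_union_left _ (Finset.mem_inter.2 ⟨(Finset.mem_inter.1 ha).1, h⟩)
      · exact Finset.mem_union_right _ (Finset.mem_filter.2 ⟨ha, h⟩)
    have hDcard : D.card ≤ t := by
      -- image of D under natAbs is disjoint from image of A(i+1), both in Icc 1 n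
      have hDinj : (D.image Int.natAbs).card = D.card := by
        apply Finset.card_image_of_injOn
        intro a ha b hb hab
        have ha' : a ∈ A i := (Finset.mem_inter.1 (Finset.mem_filter.1 ha).1).2
        have hb' : b ∈ A i := (Finset.mem_inter.1 (Finset.mem_filter.1 hb).1).2
        rcases Int.natAbs_eq_natAbs_iff.1 hab with h | h
        · exact h
        · exact absurd (h ▸ ha') (by simpa using hSi.2.2 b hb')
      have hdisj : Disjoint (D.image Int.natAbs) ((A (i+1)).image Int.natAbs) := by
        rw [Finset.disjoint_left]
        intro m hmD hmT
        simp only [Finset.mem_image] at hmD hmT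
        obtain ⟨a, ha, rfl⟩ := hmD
        obtain ⟨b, hb, hab⟩ := hmT
        have haF := Finset.mem_filter.1 ha
        have ha' : a ∈ A i := (Finset.mem_inter.1 haF.1).2
        rcases Int.natAbs_eq_natAbs_iff.1 hab.symm with h | h
        · exact haF.2 (h ▸ hb)
        · exact hpos i hi a ha' (by rw [h, neg_neg]; exact hb)
      have hsubn : (D.image Int.natAbs) ∪ ((A (i+1)).image Int.natAbs) ⊆ Finset.Icc 1 n := by
        apply Finset.union_subset _ (signed_abs_subset hSi1)
        intro m hm
        simp only [Finset.mem_image] at hm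
        obtain ⟨a, ha, rfl⟩ := hm
        have ha' : a ∈ A i := (Finset.mem_inter.1 (Finset.mem_filter.1 ha).1).2
        obtain ⟨h0, hn⟩ := hSi.2.1 a ha'
        exact Finset.mem_Icc.2 ⟨Nat.one_le_iff_ne_zero.2 (by simpa using h0), hn⟩
      have := Finset.card_le_card hsubn
      rw [Finset.card_union_of_disjoint hdisj, hDinj, signed_abs_card hSi1,
        Nat.card_Icc] at this
      omega
    calc ((A 0) ∩ (A i)).card ≤ (((A 0) ∩ (A (i+1))) ∪ D).card := Finset.card_le_card hsub
      _ ≤ ((A 0) ∩ (A (i+1))).card + D.card := Finset.card_union_le _ _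
      _ ≤ ((A 0) ∩ (A (i+1))).card + t := by omega
  -- induction
  have main : ∀ i, i < ℓ → k ≤ ((A 0) ∩ (A i)).card + i * t := by
    intro i
    induction i with
    | zero =>
      intro hi
      have := (hsigned 0 hi).1
      simp [this]
    | succ i ih =>
      intro hi
      have h1' := ih (Nat.lt_of_succ_lt hi)
      have h2' := step i hi
      nlinarith
  have hfin : k ≤ (ℓ - 1) * t := by
    have := main (ℓ - 1) (by omega)
    rw [Finset.disjoint_iff_inter_eq_empty.1 hneg] at this
    simpa using this
  have hcast : ((n : ℚ) - (k : ℚ)) = (t : ℚ) := by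
    rw [ht]; push_cast [Nat.cast_sub h1.le]; ring
  have hceil : ⌈(k : ℚ) / ((n : ℚ) - (k : ℚ))⌉₊ ≤ ℓ - 1 := by
    rw [hcast, Nat.ceil_le, div_le_iff₀ (by exact_mod_cast htpos)]
    exact_mod_cast hfin
  omega
end

section
/- For positive integers n and k with k < n < 2k, if A and B are signed k-subsets of [n] with A ∩ (−B) = ∅, then |B \ A| ≤ n − k. -/
theorem stmt_1 (n k : ℕ) (hk : 0 < k) (h1 : k < n) (h2 : n < 2 * k)
    (A B : Finset ℤ) (hA : SignedSubset n k A) (hB : SignedSubset n k B)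
    (hAB : ∀ a ∈ A, -a ∉ B) :
    (B \ A).card ≤ n - k := by
  obtain ⟨hAcard, hAmem, hAneg⟩ := hA
  obtain ⟨hBcard, hBmem, hBneg⟩ := hB
  have hinj : ∀ (S : Finset ℤ), (∀ a ∈ S, -a ∉ S) →
      Set.InjOn Int.natAbs S := by
    intro S hS x hx y hy hxy
    rcases Int.natAbs_eq_natAbs_iff.mp hxy with h | h
    · exact h
    · exact absurd (h ▸ hx) (hS y hy)
  have hsubIcc : ∀ (S : Finset ℤ), (∀ a ∈ S, a ≠ 0 ∧ a.natAbs ≤ n) →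
      S.image Int.natAbs ⊆ Finset.Icc 1 n := by
    intro S hS m hm
    obtain ⟨a, ha, rfl⟩ := Finset.mem_image.mp hm
    obtain ⟨h0, hn⟩ := hS a ha
    exact Finset.mem_Icc.mpr ⟨Nat.one_le_iff_ne_zero.mpr (fun h => h0 (Int.natAbs_eq_zero.mp h)), hn⟩
  have hdisj : Disjoint ((B \ A).image Int.natAbs) (A.image Int.natAbs) := by
    rw [Finset.disjoint_left]
    intro m hm hm'
    obtain ⟨b, hb, rfl⟩ := Finset.mem_image.mp hm
    obtain ⟨a, ha, hab⟩ := Finset.mem_image.mp hm'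
    obtain ⟨hbB, hbA⟩ := Finset.mem_sdiff.mp hb
    rcases Int.natAbs_eq_natAbs_iff.mp hab with h | h
    · exact hbA (h ▸ ha)
    · exact hAB a ha (by rw [h]; simpa using hbB)
  have hcardBA : ((B \ A).image Int.natAbs).card = (B \ A).card := by
    apply Finset.card_image_of_injOn
    exact Set.InjOn.mono (fun x hx => Finset.sdiff_subset hx) (hinj B hBneg)
  have hcardA : (A.image Int.natAbs).card = k := by
    rw [Finset.card_image_of_injOn (hinj A hAneg), hAcard]
  have hsub : ((B \ A).image Int.natAbs) ∪ (A.image Int.natAbs) ⊆ Finset.Icc 1 n := by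
    apply Finset.union_subset
    · exact Finset.Subset.trans (Finset.image_subset_image Finset.sdiff_subset)
        (hsubIcc B hBmem)
    · exact hsubIcc A hAmem
  have := Finset.card_le_card hsub
  rw [Finset.card_union_of_disjoint hdisj, hcardBA, hcardA, Nat.card_Icc] at this
  omega
end

section
/- For positive integers n and k with k < n < 2k, there exist signed k-subsets A_1, ..., A_ℓ of [n] with ℓ = 1 + ⌈k/(n−k)⌉ such that A_i ∩ (−A_{i+1}) = ∅ for 1 ≤ i ≤ ℓ−1 and A_1 ∩ A_ℓ = ∅. Concretely, arranging the ground set in cyclic order 1,2,...,n,−1,−2,...,−n, one may take A_1 = {1,...,k} and obtain A_{i+1} from A_i by shifting all elements forward by n−k positions in this cyclic order. -/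
/-- Position of an element of `{±1,…,±n}` in the cyclic order `1, 2, …, n, -1, -2, …, -n`
(positions `0, …, 2n-1`). -/
def cyclePos (n : ℕ) (x : ℤ) : ℤ := if 0 < x then x - 1 else (n : ℤ) - x - 1

/-- The element of `{±1,…,±n}` at position `j` of the cyclic order `1, …, n, -1, …, -n`. -/
def cycleElt (n : ℕ) (j : ℤ) : ℤ := if j < (n : ℤ) then j + 1 else -(j - (n : ℤ) + 1)

/-- Shift an element of `{±1,…,±n}` forward by `s` positions in the cyclic order
`1, 2, …, n, -1, -2, …, -n`. -/
def cShift (n s : ℕ) (x : ℤ) : ℤ := cycleElt n ((cyclePos n x + (s : ℤ)) % (2 * (n : ℤ)))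

lemma cycleElt_ne_zero (n : ℕ) (j : ℤ) (h0 : 0 ≤ j) (h1 : j < 2 * n) : cycleElt n j ≠ 0 := by
  unfold cycleElt; split <;> omega

lemma cycleElt_natAbs (n : ℕ) (j : ℤ) (h0 : 0 ≤ j) (h1 : j < 2 * n) :
    (cycleElt n j).natAbs ≤ n := by
  unfold cycleElt; split <;> omega

lemma cycleElt_inj {n : ℕ} {i j : ℤ} (hi0 : 0 ≤ i) (hi1 : i < 2 * n) (hj0 : 0 ≤ j)
    (hj1 : j < 2 * n) (h : cycleElt n i = cycleElt n j) : i = j := by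
  unfold cycleElt at h; split_ifs at h <;> omega

lemma neg_cycleElt (n : ℕ) (j : ℤ) (h0 : 0 ≤ j) (h1 : j < 2 * n) :
    -cycleElt n j = cycleElt n ((j + n) % (2 * n)) := by
  have h2 : ((j : ℤ) + n) % (2 * n) = if j < (n : ℤ) then j + n else j - n := by
    split
    · exact Int.emod_eq_of_lt (by omega) (by omega)
    · rw [show (j : ℤ) + n = (j - n) + 2 * n * 1 by ring, Int.add_mul_emod_self_left]
      exact Int.emod_eq_of_lt (by omega) (by omega)
  rw [h2]; unfold cycleElt; split_ifs <;> omega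

lemma emod_add_const (m a b : ℤ) : (a % m + b) % m = (a + b) % m := by
  conv_rhs => rw [Int.add_emod]
  rw [Int.add_emod (a % m), Int.emod_emod_of_dvd _ dvd_rfl]

lemma dvd_zero_of_bounds {m a : ℤ} (hm : 0 < m) (h : m ∣ a) (h1 : -m < a) (h2 : a < m) :
    a = 0 := by
  rcases h with ⟨c, rfl⟩
  rcases lt_trichotomy c 0 with h | h | h
  · have := mul_le_mul_of_nonneg_left (show c ≤ -1 by omega) hm.le
    linarith
  · simp [h]
  · have := mul_le_mul_of_nonneg_left (show (1:ℤ) ≤ c by omega) hm.le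
    linarith

lemma cycleElt_emod_dvd {n : ℕ} (hn : 0 < n) {a b : ℤ}
    (h : cycleElt n (a % (2 * n)) = cycleElt n (b % (2 * n))) : (2 * (n:ℤ)) ∣ (a - b) := by
  have h2 : (0:ℤ) < 2 * n := by positivity
  have := cycleElt_inj (Int.emod_nonneg a (by omega)) (Int.emod_lt_of_pos a h2)
    (Int.emod_nonneg b (by omega)) (Int.emod_lt_of_pos b h2) h
  rw [Int.dvd_iff_emod_eq_zero, ← Int.emod_eq_emod_iff_emod_sub_eq_zero]
  exact this

lemma mem_shift_image (n k s : ℕ) (y : ℤ) :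
    y ∈ (Finset.Icc (1 : ℤ) (k : ℤ)).image (cShift n s) ↔
      ∃ t : ℤ, 0 ≤ t ∧ t < (k : ℤ) ∧ y = cycleElt n ((t + s) % (2 * n)) := by
  simp only [Finset.mem_image, Finset.mem_Icc]
  constructor
  · rintro ⟨x, ⟨hx1, hx2⟩, rfl⟩
    refine ⟨x - 1, by omega, by omega, ?_⟩
    unfold cShift cyclePos
    rw [if_pos (by omega)]
  · rintro ⟨t, ht0, ht1, rfl⟩
    refine ⟨t + 1, ⟨by omega, by omega⟩, ?_⟩
    unfold cShift cyclePos
    rw [if_pos (by omega)]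
    congr 2
    ring

lemma neg_mem_char (n k s : ℕ) (hn : 0 < n) {a : ℤ} {t : ℤ} (ht0 : 0 ≤ t) (ht1 : t < (k:ℤ))
    (ha : a = cycleElt n ((t + s) % (2 * n))) :
    -a = cycleElt n ((t + s + n) % (2 * n)) := by
  have h2 : (0:ℤ) < 2 * n := by positivity
  rw [ha, neg_cycleElt n _ (Int.emod_nonneg _ (by omega)) (Int.emod_lt_of_pos _ h2),
    emod_add_const]

lemma part1 (n k : ℕ) (hk : 0 < k) (h1 : k < n) (s : ℕ) :
    SignedSubset n k ((Finset.Icc (1 : ℤ) (k : ℤ)).image (cShift n s)) := by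
  have hn : 0 < n := hk.trans h1
  refine ⟨?_, ?_, ?_⟩
  · rw [Finset.card_image_of_injOn, Int.card_Icc]
    · omega
    · intro x hx y hy h
      rw [Finset.coe_Icc, Set.mem_Icc] at hx hy
      unfold cShift cyclePos at h
      rw [if_pos (by omega), if_pos (by omega)] at h
      have hd := cycleElt_emod_dvd hn h
      have := dvd_zero_of_bounds (by positivity) hd (by omega) (by omega)
      omega
  · intro a ha
    rw [mem_shift_image] at ha
    obtain ⟨t, ht0, ht1, rfl⟩ := ha
    have h2 : (0:ℤ) < 2 * n := by positivity
    exact ⟨cycleElt_ne_zero n _ (Int.emod_nonneg _ (by omega)) (Int.emod_lt_of_pos _ h2),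
      cycleElt_natAbs n _ (Int.emod_nonneg _ (by omega)) (Int.emod_lt_of_pos _ h2)⟩
  · intro a ha hna
    rw [mem_shift_image] at ha hna
    obtain ⟨t, ht0, ht1, ha⟩ := ha
    obtain ⟨t', ht0', ht1', ha'⟩ := hna
    have h3 := neg_mem_char n k s hn ht0 ht1 ha
    have hd := cycleElt_emod_dvd hn (h3.symm.trans ha')
    have := dvd_zero_of_bounds (by positivity) hd (by omega) (by omega)
    omega

lemma part2 (n k s : ℕ) (hk : 0 < k) (h1 : k < n) :
    ∀ a ∈ (Finset.Icc (1 : ℤ) (k : ℤ)).image (cShift n s),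
      -a ∉ (Finset.Icc (1 : ℤ) (k : ℤ)).image (cShift n (s + (n - k))) := by
  have hn : 0 < n := hk.trans h1
  intro a ha hna
  rw [mem_shift_image] at ha hna
  obtain ⟨t, ht0, ht1, ha⟩ := ha
  obtain ⟨t', ht0', ht1', ha'⟩ := hna
  have h3 := neg_mem_char n k s hn ht0 ht1 ha
  have hd := cycleElt_emod_dvd hn (h3.symm.trans ha')
  have := dvd_zero_of_bounds (by positivity) hd (by omega) (by omega)
  omega

lemma part3 (n k s : ℕ) (hk : 0 < k) (h1 : k < n) (hs1 : k ≤ s) (hs2 : s < n) :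
    Disjoint ((Finset.Icc (1 : ℤ) (k : ℤ)).image (cShift n 0))
      ((Finset.Icc (1 : ℤ) (k : ℤ)).image (cShift n s)) := by
  have hn : 0 < n := hk.trans h1
  rw [Finset.disjoint_left]
  intro a ha ha'
  rw [mem_shift_image] at ha ha'
  obtain ⟨t, ht0, ht1, ha⟩ := ha
  obtain ⟨t', ht0', ht1', ha'⟩ := ha'
  have hd := cycleElt_emod_dvd hn (ha.symm.trans ha')
  have := dvd_zero_of_bounds (by positivity) hd (by omega) (by omega)
  omega

/-- For `k < n < 2k` and `ℓ = 1 + ⌈k/(n-k)⌉`, the sets `A i`, obtained from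
`A 0 = {1, …, k}` by shifting `i` times forward by `n - k` positions in the cyclic order
`1, …, n, -1, …, -n`, are signed `k`-subsets of `[n]` with `A i ∩ (-(A (i+1))) = ∅` for
`i + 1 < ℓ` and `A 0 ∩ A (ℓ-1) = ∅`; i.e. they form an inconsistent cycle of length
`1 + ⌈k/(n-k)⌉` in the Kneser signed graph `KS(n,k)`. -/
theorem stmt_2 (n k : ℕ) (hk : 0 < k) (h1 : k < n) (h2 : n < 2 * k)
    (ℓ : ℕ) (hℓ : ℓ = 1 + ⌈(k : ℚ) / ((n : ℚ) - (k : ℚ))⌉₊)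
    (A : ℕ → Finset ℤ)
    (hA : ∀ i, A i = (Finset.Icc (1 : ℤ) (k : ℤ)).image (cShift n ((n - k) * i))) :
    (∀ i < ℓ, SignedSubset n k (A i)) ∧
      (∀ i, i + 1 < ℓ → ∀ a ∈ A i, -a ∉ A (i + 1)) ∧
      Disjoint (A 0) (A (ℓ - 1)) := by
  set q : ℕ := ⌈(k : ℚ) / ((n : ℚ) - (k : ℚ))⌉₊ with hq
  have hd : 0 < n - k := by omega
  have hpos : (0:ℚ) < (n : ℚ) - (k : ℚ) := by
    have : (k:ℚ) < (n:ℚ) := by exact_mod_cast h1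
    linarith
  have hq1 : k ≤ (n - k) * q := by
    have hle : (k:ℚ) / ((n:ℚ) - (k:ℚ)) ≤ q := Nat.le_ceil _
    rw [div_le_iff₀ hpos] at hle
    have h5 : (k:ℚ) ≤ (((n - k) * q : ℕ) : ℚ) := by
      push_cast [Nat.cast_sub h1.le]
      linarith
    exact_mod_cast h5
  have hq2 : (n - k) * q < n := by
    set d := n - k with hdd
    set m := (k + d - 1) / d with hm
    obtain ⟨p, hp⟩ : ∃ p, d * m = p := ⟨_, rfl⟩
    have hdm := Nat.div_add_mod (k + d - 1) d
    rw [← hm, hp] at hdm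
    have hmod : (k + d - 1) % d < d := Nat.mod_lt _ hd
    have hqm : q ≤ m := by
      apply Nat.ceil_le.mpr
      rw [div_le_iff₀ hpos]
      have h5 : (k:ℚ) ≤ ((d * m : ℕ) : ℚ) := by exact_mod_cast (show k ≤ d * m by omega)
      push_cast at h5
      have h6 : ((d:ℕ):ℚ) = (n:ℚ) - (k:ℚ) := by
        rw [hdd]; push_cast [Nat.cast_sub h1.le]; ring
      nlinarith [h5, h6, hpos, (show (0:ℚ) ≤ ((m:ℕ):ℚ) by positivity)]
    have : d * q ≤ d * m := Nat.mul_le_mul_left d hqm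
    omega
  refine ⟨?_, ?_, ?_⟩
  · intro i _
    rw [hA i]
    exact part1 n k hk h1 _
  · intro i _
    rw [hA i, hA (i + 1), Nat.mul_succ]
    exact part2 n k ((n - k) * i) hk h1
  · rw [hA 0, hA (ℓ - 1)]
    have : ℓ - 1 = q := by omega
    rw [this, Nat.mul_zero]
    exact part3 n k ((n - k) * q) hk h1 hq1 hq2
end

section
/- For integers p ≥ 2 and n ≥ 1, let k be the largest integer such that C(p+k−1, k) ≤ n. Then (e·(1 + ⌈k/(p−1)⌉))^(p−1) > n. -/
-- n^n ≤ e^(n-1) * n!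
lemma pow_self_le_exp_mul_factorial : ∀ q : ℕ, 1 ≤ q →
    (q : ℝ) ^ q ≤ Real.exp 1 ^ (q - 1) * q.factorial := by
  intro q hq
  induction q, hq using Nat.le_induction with
  | base => norm_num
  | succ q hq ih =>
    have hq0 : (0 : ℝ) < q := by exact_mod_cast hq
    have h1 : ((q : ℝ) + 1) ^ q ≤ Real.exp 1 * (q : ℝ) ^ q := by
      have ha : ((q : ℝ) + 1) ≤ Real.exp (1 / q) * q := by
        have := Real.add_one_le_exp (1 / (q : ℝ))
        have h := mul_le_mul_of_nonneg_right this hq0.le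
        calc ((q : ℝ) + 1) = (1 / q + 1) * q := by field_simp; ring
          _ ≤ Real.exp (1 / q) * q := h
      calc ((q : ℝ) + 1) ^ q ≤ (Real.exp (1 / q) * q) ^ q :=
            pow_le_pow_left₀ (by positivity) ha q
        _ = Real.exp (1 / q) ^ q * (q : ℝ) ^ q := mul_pow _ _ _
        _ = Real.exp 1 * (q : ℝ) ^ q := by
            rw [← Real.exp_nat_mul]
            congr 2
            field_simp
    have h2 : ((q : ℝ) + 1) ^ (q + 1) = ((q : ℝ) + 1) * ((q : ℝ) + 1) ^ q := by ring
    have hfac : ((q + 1).factorial : ℝ) = ((q : ℝ) + 1) * q.factorial := by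
      rw [Nat.factorial_succ]; push_cast; ring
    have hE : Real.exp 1 ^ (q + 1 - 1) = Real.exp 1 * Real.exp 1 ^ (q - 1) := by
      have h : q + 1 - 1 = (q - 1) + 1 := by omega
      rw [h, pow_succ]; ring
    push_cast
    push_cast at ih
    calc ((q : ℝ) + 1) ^ (q + 1) = ((q : ℝ) + 1) * ((q : ℝ) + 1) ^ q := h2
      _ ≤ ((q : ℝ) + 1) * (Real.exp 1 * (q : ℝ) ^ q) := by
          apply mul_le_mul_of_nonneg_left h1 (by positivity)
      _ ≤ ((q : ℝ) + 1) * (Real.exp 1 * (Real.exp 1 ^ (q - 1) * q.factorial)) := by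
          apply mul_le_mul_of_nonneg_left _ (by positivity)
          exact mul_le_mul_of_nonneg_left ih (Real.exp_pos 1).le
      _ = Real.exp 1 ^ (q + 1 - 1) * ((q + 1).factorial : ℝ) := by
          rw [hE, hfac]; ring

/-- If `p ≥ 2`, `n ≥ 1` and `k` is the largest integer with `C(p+k-1, k) ≤ n`
(equivalently `C(p+k-1,k) ≤ n < C(p+k, k+1)`), then
`n^(1/(p-1)) / e ≤ 1 + ⌈k/(p-1)⌉`, i.e. `(e·(1 + ⌈k/(p-1)⌉))^(p-1) > n`. -/
theorem stmt_3 (p n k : ℕ) (hp : 2 ≤ p) (hn : 1 ≤ n)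
    (hk : (p + k - 1).choose k ≤ n) (hk' : n < (p + k).choose (k + 1)) :
    (n : ℝ) ^ ((1 : ℝ) / ((p : ℝ) - 1)) / Real.exp 1
        ≤ 1 + (⌈(k : ℝ) / ((p : ℝ) - 1)⌉₊ : ℝ) ∧
    (n : ℝ) < (Real.exp 1 * (1 + (⌈(k : ℝ) / ((p : ℝ) - 1)⌉₊ : ℝ))) ^ (p - 1) := by
  set q : ℕ := p - 1 with hqdef
  have hq1 : 1 ≤ q := by omega
  have hq0 : (0 : ℝ) < q := by exact_mod_cast hq1
  have hpq : (p : ℝ) - 1 = (q : ℝ) := by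
    have : ((q : ℕ) : ℝ) = (p : ℝ) - 1 := by
      rw [hqdef]; push_cast [Nat.cast_sub (by omega : 1 ≤ p)]; ring
    linarith
  set c : ℕ := ⌈(k : ℝ) / ((p : ℝ) - 1)⌉₊ with hcdef
  set C : ℝ := 1 + (c : ℝ) with hCdef
  have hC1 : (1 : ℝ) ≤ C := by
    have : (0 : ℝ) ≤ (c : ℝ) := Nat.cast_nonneg c
    linarith
  have hC0 : (0 : ℝ) < C := by linarith
  have hkc : (k : ℝ) ≤ (q : ℝ) * c := by
    have h : (k : ℝ) / ((p : ℝ) - 1) ≤ (c : ℝ) := Nat.le_ceil _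
    rw [hpq, div_le_iff₀ hq0] at h
    linarith
  -- choose symmetry
  have hsymm : (p + k).choose (k + 1) = (p + k).choose q := by
    have h1 : k + 1 ≤ p + k := by omega
    have := Nat.choose_symm h1
    have h2 : p + k - (k + 1) = q := by omega
    rw [h2] at this
    omega
  have hnc : (n : ℝ) < ((p + k).choose q : ℝ) := by
    exact_mod_cast hsymm ▸ hk'
  -- main bound : choose (p+k) q ≤ (e C)^q
  have hfacpos : (0 : ℝ) < (q.factorial : ℝ) := by exact_mod_cast q.factorial_pos
  have hcb : ((p + k).choose q : ℝ) ≤ ((p + k : ℕ) : ℝ) ^ q / q.factorial :=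
    Nat.choose_le_pow_div q (p + k)
  set x : ℝ := (q : ℝ) * C with hxdef
  have hq1' : (1 : ℝ) ≤ (q : ℝ) := by exact_mod_cast hq1
  have hx1 : (1 : ℝ) ≤ x := by
    rw [hxdef]; nlinarith
  have hx0 : (0 : ℝ) < x := by linarith
  have hm : ((p + k : ℕ) : ℝ) ≤ x + 1 := by
    push_cast
    rw [hxdef, hCdef]
    have : (p : ℝ) = (q : ℝ) + 1 := by linarith [hpq]
    nlinarith
  have hmx : ((p + k : ℕ) : ℝ) ≤ x * Real.exp (1 / x) := by
    have := Real.add_one_le_exp (1 / x)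
    have h := mul_le_mul_of_nonneg_right this hx0.le
    have hx' : (1 / x + 1) * x = x + 1 := by field_simp; ring
    nlinarith [Real.exp_pos (1/x)]
  have hmpow : ((p + k : ℕ) : ℝ) ^ q ≤ x ^ q * Real.exp (1 / C) := by
    calc ((p + k : ℕ) : ℝ) ^ q ≤ (x * Real.exp (1 / x)) ^ q :=
          pow_le_pow_left₀ (Nat.cast_nonneg _) hmx q
      _ = x ^ q * Real.exp (1 / x) ^ q := mul_pow _ _ _
      _ = x ^ q * Real.exp (1 / C) := by
          rw [← Real.exp_nat_mul]
          congr 2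
          rw [hxdef]
          field_simp
  have hexpC : Real.exp (1 / C) ≤ Real.exp 1 := by
    apply Real.exp_le_exp.mpr
    rw [div_le_one hC0]; exact hC1
  have hqq : (q : ℝ) ^ q ≤ Real.exp 1 ^ (q - 1) * q.factorial :=
    pow_self_le_exp_mul_factorial q hq1
  have hEq : Real.exp 1 ^ (q - 1) * Real.exp 1 = Real.exp 1 ^ q := by
    have h : q = (q - 1) + 1 := by omega
    conv_rhs => rw [h, pow_succ]
  have key : ((p + k).choose q : ℝ) ≤ (Real.exp 1 * C) ^ q := by
    have h1 : ((p + k : ℕ) : ℝ) ^ q ≤ (q : ℝ) ^ q * C ^ q * Real.exp 1 := by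
      calc ((p + k : ℕ) : ℝ) ^ q ≤ x ^ q * Real.exp (1 / C) := hmpow
        _ = (q : ℝ) ^ q * C ^ q * Real.exp (1 / C) := by rw [hxdef, mul_pow]
        _ ≤ (q : ℝ) ^ q * C ^ q * Real.exp 1 := by
            apply mul_le_mul_of_nonneg_left hexpC (by positivity)
    have h2 : ((p + k : ℕ) : ℝ) ^ q ≤ Real.exp 1 ^ q * q.factorial * C ^ q := by
      calc ((p + k : ℕ) : ℝ) ^ q ≤ (q : ℝ) ^ q * C ^ q * Real.exp 1 := h1
        _ ≤ Real.exp 1 ^ (q - 1) * q.factorial * C ^ q * Real.exp 1 := by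
            apply mul_le_mul_of_nonneg_right _ (Real.exp_pos 1).le
            apply mul_le_mul_of_nonneg_right hqq (by positivity)
        _ = Real.exp 1 ^ q * q.factorial * C ^ q := by rw [← hEq]; ring
    calc ((p + k).choose q : ℝ) ≤ ((p + k : ℕ) : ℝ) ^ q / q.factorial := hcb
      _ ≤ Real.exp 1 ^ q * q.factorial * C ^ q / q.factorial := by
          gcongr
      _ = (Real.exp 1 * C) ^ q := by
          rw [mul_pow]
          field_simp
  have main : (n : ℝ) < (Real.exp 1 * C) ^ q := lt_of_lt_of_le hnc key
  constructor
  · -- first part via rpow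
    have hn0 : (0 : ℝ) < n := by exact_mod_cast hn
    have hEC : (0 : ℝ) < Real.exp 1 * C := by positivity
    have h1 : (n : ℝ) ^ ((1 : ℝ) / (q : ℝ)) ≤ Real.exp 1 * C := by
      have h2 : (n : ℝ) ^ ((1 : ℝ) / (q : ℝ)) ≤ ((Real.exp 1 * C) ^ q) ^ ((1 : ℝ) / (q : ℝ)) :=
        Real.rpow_le_rpow hn0.le main.le (by positivity)
      have h3 : ((Real.exp 1 * C) ^ q : ℝ) ^ ((1 : ℝ) / (q : ℝ)) = Real.exp 1 * C := by
        rw [← Real.rpow_natCast (Real.exp 1 * C) q, ← Real.rpow_mul hEC.le]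
        rw [mul_one_div, div_self (ne_of_gt hq0), Real.rpow_one]
      rwa [h3] at h2
    rw [hpq]
    rw [div_le_iff₀ (Real.exp_pos 1)]
    calc (n : ℝ) ^ ((1 : ℝ) / (q : ℝ)) ≤ Real.exp 1 * C := h1
      _ = C * Real.exp 1 := mul_comm _ _
  · rwa [hqdef] at main
end

section
/- Let G be a graph on n vertices with signature σ, and suppose (G,σ) has a negative cycle (a cycle whose edge-sign product is −1) and every negative cycle has length at least ℓ. Fix a vertex v and for i ≥ 0 let V_i = {u : d(u,v) = i} (distance in the underlying graph). Then for every 0 ≤ i ≤ ⌊(ℓ−2)/2⌋, the induced signed subgraph on V_i is balanced. -/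
variable {V : Type*}

/-- A set `S` of vertices of a signed graph `(G, σ)` is balanced if it induces no
negative cycle (no cycle within `S` whose edge-sign product is `-1`). -/
def IsBalancedSet (G : SimpleGraph V) (σ : Sym2 V → ℤˣ) (S : Set V) : Prop :=
  ∀ (v : V) (w : G.Walk v v), w.IsCycle → (∀ x ∈ w.support, x ∈ S) →
    (w.edges.map σ).prod = 1

/-- The signed graph `(G, σ)` admits a balanced `p`-coloring: a partition of the
vertices into (at most) `p` balanced sets. -/
def HasBalancedColoring (G : SimpleGraph V) (σ : Sym2 V → ℤˣ) (p : ℕ) : Prop :=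
  ∃ f : V → Fin p, ∀ i, IsBalancedSet G σ {v | f v = i}

/-- The induced signed subgraph on a set `S` of vertices admits a balanced `p`-coloring. -/
def HasBalancedColoringOn (G : SimpleGraph V) (σ : Sym2 V → ℤˣ) (S : Set V) (p : ℕ) : Prop :=
  ∃ f : V → Fin p, ∀ i, IsBalancedSet G σ {v | v ∈ S ∧ f v = i}

/-- The balanced chromatic number of a signed graph. -/
noncomputable def balChrNum (G : SimpleGraph V) (σ : Sym2 V → ℤˣ) : ℕ :=
  sInf {p | HasBalancedColoring G σ p}

/-- The balanced chromatic number of the induced signed subgraph on `S`. -/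
noncomputable def balChrNumOn (G : SimpleGraph V) (σ : Sym2 V → ℤˣ) (S : Set V) : ℕ :=
  sInf {p | HasBalancedColoringOn G σ S p}

/-- The subgraph (set) `S` has radius at most `r` in `G`:
some vertex of `S` is within distance `r` (in `G`) of every vertex of `S`. -/
def RadiusLE (G : SimpleGraph V) (S : Set V) (r : ℕ) : Prop :=
  ∃ x ∈ S, ∀ y ∈ S, G.Reachable x y ∧ G.dist x y ≤ r

/-!
For each vertex `u` of the level `V_i` fix a shortest `u`–`v` walk `P_u` and let `ε u` be its
sign. If `x, y ∈ V_i` are adjacent, the closed walk `x y P_y P_x⁻¹` has length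
`2i + 1 < max ℓ 3` (every cycle has length at least 3, which covers `i = 0`). A negative closed
walk contains a negative cycle no longer than itself (split it at a repeated vertex; one of the
two pieces is negative), so this walk is positive, i.e. `σ(xy) = ε x * ε y`. Hence `ε` switches
the level to an all-positive signature and every cycle inside it is positive.
-/

namespace SimpleGraph.Walk

variable {G : SimpleGraph V} (σ : Sym2 V → ℤˣ)

def sign {u v : V} (p : G.Walk u v) : ℤˣ := (p.edges.map σ).prod

@[simp]
lemma sign_nil {u : V} : (nil : G.Walk u u).sign σ = 1 := rfl

@[simp]
lemma sign_cons {u v w : V} (h : G.Adj u v) (p : G.Walk v w) :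
    (cons h p).sign σ = σ s(u, v) * p.sign σ := by
  simp [sign]

@[simp]
lemma sign_append {u v w : V} (p : G.Walk u v) (q : G.Walk v w) :
    (p.append q).sign σ = p.sign σ * q.sign σ := by
  simp [sign, edges_append]

@[simp]
lemma sign_reverse {u v : V} (p : G.Walk u v) : p.reverse.sign σ = p.sign σ := by
  simp [sign, edges_reverse, List.prod_reverse]

lemma exists_eq_append_append_of_not_isPath {u v : V} {p : G.Walk u v}
    (hp : ¬p.IsPath) : ∃ (w : V) (q₁ : G.Walk u w) (c : G.Walk w w) (q₂ : G.Walk w v),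
      ¬c.Nil ∧ p = q₁.append (c.append q₂) := by
  classical
  induction p with
  | nil => exact absurd IsPath.nil hp
  | @cons u u' v h p ih =>
    by_cases hp' : p.IsPath
    · have hu : u ∈ p.support := by simpa [hp'] using hp
      refine ⟨u, nil, cons h (p.takeUntil u hu), p.dropUntil u hu, not_nil_cons, ?_⟩
      rw [nil_append, cons_append, take_spec]
    · obtain ⟨w, q₁, c, q₂, hc, rfl⟩ := ih hp'
      exact ⟨w, cons h q₁, c, q₂, hc, rfl⟩

lemma sign_eq_one_of_length_lt_three {u : V} (w : G.Walk u u) (hw : w.length < 3) :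
    w.sign σ = 1 :=
  match w, hw with
  | nil, _ => rfl
  | cons h nil, _ => absurd h (G.irrefl)
  | cons h (cons _ nil), _ => by simp [Sym2.eq_swap, Int.units_mul_self]

lemma exists_isCycle_sign_eq_neg_one {u : V} (w : G.Walk u u) (hw : w.sign σ = -1) :
    ∃ (x : V) (c : G.Walk x x), c.IsCycle ∧ c.sign σ = -1 ∧ c.length ≤ w.length := by
  classical
  induction hn : w.length using Nat.strong_induction_on generalizing u w with
  | _ n ih =>
  subst hn
  by_cases hlen : w.length < 3
  · simp [sign_eq_one_of_length_lt_three σ w hlen] at hw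
  cases w with
  | nil => simp at hlen
  | cons h p =>
    by_cases hp : p.IsPath
    · have hcycle : (cons h p).IsCycle :=
        isCycle_iff_isPath_tail_and_le_length.mpr ⟨by simpa using hp, by omega⟩
      exact ⟨u, cons h p, hcycle, hw, le_rfl⟩
    obtain ⟨y, q₁, c, q₂, hc, rfl⟩ := exists_eq_append_append_of_not_isPath hp
    have hc_pos : 0 < c.length := not_nil_iff_lt_length.mp hc
    have hsplit : (cons h (q₁.append (c.append q₂))).length =
        (q₁.append q₂).length + 1 + c.length := by
      simp only [length_cons, length_append]; omega
    rcases Int.units_eq_one_or (c.sign σ) with hc1 | hc1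
    · obtain ⟨x, c', hc', hneg, hle⟩ :=
        ih _ (by omega) (cons h (q₁.append q₂)) (by simpa [hc1] using hw) (length_cons h _)
      exact ⟨x, c', hc', hneg, by omega⟩
    · obtain ⟨x, c', hc', hneg, hle⟩ := ih _ (by omega) c hc1 rfl
      exact ⟨x, c', hc', hneg, by omega⟩

lemma sign_eq_mul_of_forall_adj {S : Set V} (ε : V → ℤˣ)
    (hε : ∀ x ∈ S, ∀ y ∈ S, G.Adj x y → σ s(x, y) = ε x * ε y) {u v : V}
    (p : G.Walk u v) (hp : ∀ z ∈ p.support, z ∈ S) : p.sign σ = ε u * ε v := by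
  induction p with
  | nil => simp [Int.units_mul_self]
  | @cons u w v h q ih =>
    have hq : ∀ z ∈ q.support, z ∈ S := fun z hz => hp z (by simp [hz])
    rw [sign_cons, ih hq, hε u (hp u (by simp)) w (hq w q.start_mem_support) h, mul_assoc,
      ← mul_assoc (ε w), Int.units_mul_self, one_mul]

end SimpleGraph.Walk

open SimpleGraph Walk

lemma isBalancedSet_of_forall_adj {G : SimpleGraph V} (σ : Sym2 V → ℤˣ) {S : Set V}
    (ε : V → ℤˣ) (hε : ∀ x ∈ S, ∀ y ∈ S, G.Adj x y → σ s(x, y) = ε x * ε y) :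
    IsBalancedSet G σ S := fun _ w _ hw =>
  (w.sign_eq_mul_of_forall_adj σ ε hε hw).trans (Int.units_mul_self _)

lemma isBalancedSet_dist_eq {G : SimpleGraph V} (σ : Sym2 V → ℤˣ) (v : V) (i : ℕ)
    (hpos : ∀ (x : V) (w : G.Walk x x), w.length ≤ 2 * i + 1 → w.sign σ = 1) :
    IsBalancedSet G σ {u | G.Reachable u v ∧ G.dist u v = i} := by
  have hlevel : ∀ u ∈ {u | G.Reachable u v ∧ G.dist u v = i},
      ∃ s : ℤˣ, ∃ p : G.Walk u v, p.length = i ∧ p.sign σ = s := by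
    rintro u ⟨hr, rfl⟩
    obtain ⟨p, hp⟩ := hr.exists_walk_length_eq_dist
    exact ⟨_, p, hp, rfl⟩
  choose! ε hε using hlevel
  refine isBalancedSet_of_forall_adj σ ε fun x hx y hy hxy => ?_
  obtain ⟨px, hpx, hεx⟩ := hε x hx
  obtain ⟨py, hpy, hεy⟩ := hε y hy
  have hclosed := hpos x (cons hxy (py.append px.reverse))
    (by simp only [length_cons, length_append, length_reverse]; omega)
  rw [sign_cons, sign_append, sign_reverse] at hclosed
  rw [← hεx, ← hεy, eq_inv_of_mul_eq_one_left hclosed, Int.units_inv_eq_self, mul_comm]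

theorem stmt_10_general {V : Type*} (G : SimpleGraph V) (σ : Sym2 V → ℤˣ) (ℓ : ℕ)
    (hgirth : ∀ (x : V) (w : G.Walk x x), w.IsCycle → (w.edges.map σ).prod = -1 →
      ℓ ≤ w.length)
    (v : V) (i : ℕ) (hi : i ≤ (ℓ - 2) / 2) :
    IsBalancedSet G σ {u | G.Reachable u v ∧ G.dist u v = i} := by
  refine isBalancedSet_dist_eq σ v i fun x w hw => ?_
  by_contra hneg
  obtain ⟨y, c, hc, hcneg, hle⟩ :=
    w.exists_isCycle_sign_eq_neg_one σ ((Int.units_eq_one_or _).resolve_left hneg)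
  have hℓ := hgirth y c hc hcneg
  have hthree := hc.three_le_length
  omega

/-- If `(G, σ)` has a negative cycle and every negative cycle has length at least `ℓ`,
then for `0 ≤ i ≤ ⌊(ℓ-2)/2⌋` each distance level `V_i = {u : d(u, v) = i}` from a fixed
vertex `v` is a balanced set. -/
theorem stmt_10 {V : Type*} [Fintype V] (G : SimpleGraph V) (σ : Sym2 V → ℤˣ) (ℓ : ℕ)
    (hex : ∃ (x : V) (w : G.Walk x x), w.IsCycle ∧ (w.edges.map σ).prod = -1)
    (hgirth : ∀ (x : V) (w : G.Walk x x), w.IsCycle → (w.edges.map σ).prod = -1 →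
      ℓ ≤ w.length)
    (v : V) (i : ℕ) (hi : i ≤ (ℓ - 2) / 2) :
    IsBalancedSet G σ {u | G.Reachable u v ∧ G.dist u v = i} :=
  stmt_10_general G σ ℓ hgirth v i hi
end
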